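/- Averaged-versus-continuum convergence: Let W : [0,1]² → [0,1] be continuously differentiable and symmetric, η ∈ C¹([0,1]), and let f and D satisfy the regularity assumptions (f Lipschitz with constant L_f and 2π-periodic in its first argument, continuous in its second; D Lipschitz with constant L_D, 2π-periodic, |D| ≤ 1). Let θ(t,x) be the solution of the continuum dynamical system, and let θ̄ⁿ(t,x) be the piecewise constant interpolant of the solution of the averaged dynamical system. Then for any fixed ε, T > 0, there exists n₂ ∈ ℕ such that for all n > n₂, max_{x∈[0,1]} |θ̄ⁿ(T,x) − θ(T,x)| < ε. -/

import Mathlib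

/-! Compare the averaged solution with the continuum solution sampled at the left endpoints of
the cells, `U t i = Θbar n t i - θ t (i / n)`. The derivative of `U` is the difference of the two
vector fields, which is at most `(Lf + 2 LD) ‖U t‖` plus a consistency error: `KW / n` for
replacing `W (i / n) y` by the cell average (`W`, being `C¹` on the square, is `KW`-Lipschitz
there), and `LD ω` for replacing `θ t y` by `θ t (j / n)` on cell `j`, where `ω` is the
oscillation of `θ` on cells of width `1 / n`, uniformly over `[0, T] × [0, 1]`. Since `U 0 = 0`,
Grönwall's inequality bounds `‖U T‖` by a quantity that vanishes with the consistency error, and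
one more use of uniform continuity passes from `θ T (i / n)` to `θ T x`. -/

open MeasureTheory Set Filter

/-- The cell average `W⁽ⁿ⁾ᵢⱼ = n² ∫_{Iᵢ⁽ⁿ⁾×Iⱼ⁽ⁿ⁾} W(x,y) dx dy`, where the cells are
indexed by `Fin n` (so the cell of index `i` is `[i/n, (i+1)/n)`). -/
noncomputable def cellAvg (W : ℝ → ℝ → ℝ) (n : ℕ) (i j : Fin n) : ℝ :=
  (n : ℝ) ^ 2 * ∫ x in ((i.val : ℝ) / n)..(((i.val : ℝ) + 1) / n),
    ∫ y in ((j.val : ℝ) / n)..(((j.val : ℝ) + 1) / n), W x y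

/-- The piecewise constant interpolant `x ↦ Σᵢ vᵢ·𝟙_{[i/n,(i+1)/n)}(x)` of a vector
`v : Fin n → ℝ`. -/
noncomputable def interp (n : ℕ) (v : Fin n → ℝ) (x : ℝ) : ℝ :=
  ∑ i : Fin n,
    v i * Set.indicator (Ico ((i.val : ℝ) / n) (((i.val : ℝ) + 1) / n)) (fun _ => 1) x

def cell (n : ℕ) (j : Fin n) : Set ℝ := Icc ((j.val : ℝ) / n) (((j.val : ℝ) + 1) / n)

section Cells

variable {n : ℕ}

lemma cell_left_le_right (j : Fin n) : (j.val : ℝ) / n ≤ ((j.val : ℝ) + 1) / n := by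
  gcongr; linarith

lemma left_mem_cell (j : Fin n) : (j.val : ℝ) / n ∈ cell n j :=
  ⟨le_rfl, cell_left_le_right j⟩

lemma cell_subset_unitInterval (j : Fin n) : cell n j ⊆ Icc 0 1 := by
  have hn : (0 : ℝ) < n := by exact_mod_cast j.pos
  refine Icc_subset_Icc (by positivity) ?_
  rw [div_le_one hn]
  exact_mod_cast j.isLt

lemma abs_sub_le_of_mem_cell {j : Fin n} {x y : ℝ} (hx : x ∈ cell n j) (hy : y ∈ cell n j) :
    |x - y| ≤ 1 / n := by
  have : ((j.val : ℝ) + 1) / n - (j.val : ℝ) / n = 1 / n := by ring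
  rw [abs_sub_le_iff]
  constructor <;> linarith [hx.1, hx.2, hy.1, hy.2]

lemma exists_mem_Ico_cell (hn : 0 < n) {x : ℝ} (hx : x ∈ Ico (0 : ℝ) 1) :
    ∃ i : Fin n, x ∈ Ico ((i.val : ℝ) / n) (((i.val : ℝ) + 1) / n) := by
  have hnR : (0 : ℝ) < n := by exact_mod_cast hn
  have hnx : 0 ≤ (n : ℝ) * x := mul_nonneg hnR.le hx.1
  have hlt : ⌊(n : ℝ) * x⌋₊ < n := by
    rw [Nat.floor_lt hnx]
    nlinarith [hx.2]
  refine ⟨⟨_, hlt⟩, ?_, ?_⟩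
  · rw [div_le_iff₀ hnR]
    linarith [Nat.floor_le hnx]
  · rw [lt_div_iff₀ hnR]
    linarith [Nat.lt_floor_add_one ((n : ℝ) * x)]

lemma interp_eq_of_mem_Ico (v : Fin n → ℝ) {i : Fin n} {x : ℝ}
    (hx : x ∈ Ico ((i.val : ℝ) / n) (((i.val : ℝ) + 1) / n)) : interp n v x = v i := by
  have hn : (0 : ℝ) < n := by exact_mod_cast i.pos
  have index_lt_succ : ∀ {j k : Fin n}, (j.val : ℝ) / n ≤ x → x < ((k.val : ℝ) + 1) / n →
      j.val < k.val + 1 := fun h₁ h₂ => by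
    exact_mod_cast (div_lt_div_iff_of_pos_right hn).1 (h₁.trans_lt h₂)
  unfold interp
  rw [Finset.sum_eq_single i, indicator_of_mem hx, mul_one]
  · intro j _ hji
    rw [indicator_of_notMem, mul_zero]
    intro hj
    have := index_lt_succ hj.1 hx.2
    have := index_lt_succ hx.1 hj.2
    exact hji (Fin.ext (by omega))
  · exact fun h => absurd (Finset.mem_univ i) h

lemma integral_unitInterval_eq_sum_cells (hn : 0 < n) {g : ℝ → ℝ}
    (hg : IntervalIntegrable g volume 0 1) :
    ∫ y in (0 : ℝ)..1, g y
      = ∑ j : Fin n, ∫ y in ((j.val : ℝ) / n)..(((j.val : ℝ) + 1) / n), g y := by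
  have hint : ∀ k < n, IntervalIntegrable g volume ((k : ℝ) / n) (((k + 1 : ℕ) : ℝ) / n) :=
    fun k hk => hg.mono_set <| by
      rw [uIcc_of_le zero_le_one, Nat.cast_succ, uIcc_of_le (cell_left_le_right ⟨k, hk⟩)]
      exact cell_subset_unitInterval ⟨k, hk⟩
  have h := intervalIntegral.sum_integral_adjacent_intervals hint
  rw [Nat.cast_zero, zero_div, div_self (by exact_mod_cast hn.ne')] at h
  rw [← h, ← Fin.sum_univ_eq_sum_range]
  push_cast
  rfl

end Cells

lemma abs_integral_integral_sub_const_le {F : ℝ → ℝ → ℝ} {a b c d C δ : ℝ}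
    (hab : a ≤ b) (hcd : c ≤ d) (hF : ContinuousOn (Function.uncurry F) (Icc a b ×ˢ Icc c d))
    (hδ : ∀ x ∈ Icc a b, ∀ y ∈ Icc c d, |F x y - C| ≤ δ) :
    |(∫ x in a..b, ∫ y in c..d, F x y) - (b - a) * (d - c) * C| ≤ δ * ((b - a) * (d - c)) := by
  set R := Ioc a b ×ˢ Ioc c d
  have hvol : (volume : Measure (ℝ × ℝ)).real R = (b - a) * (d - c) := by
    rw [Measure.volume_eq_prod, measureReal_def, Measure.prod_prod, Real.volume_Ioc,
      Real.volume_Ioc, ENNReal.toReal_mul, ENNReal.toReal_ofReal (by linarith),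
      ENNReal.toReal_ofReal (by linarith)]
  have hfin : volume R < ⊤ := by
    rw [Measure.volume_eq_prod, Measure.prod_prod]
    exact ENNReal.mul_lt_top measure_Ioc_lt_top measure_Ioc_lt_top
  have hint : IntegrableOn (Function.uncurry F) R :=
    (hF.integrableOn_compact (isCompact_Icc.prod isCompact_Icc)).mono_set
      (prod_mono Ioc_subset_Icc_self Ioc_subset_Icc_self)
  have hiter : (∫ x in a..b, ∫ y in c..d, F x y) = ∫ p in R, Function.uncurry F p := by
    simp_rw [intervalIntegral.integral_of_le hab, intervalIntegral.integral_of_le hcd]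
    rw [Measure.volume_eq_prod, setIntegral_prod _ (by rwa [← Measure.volume_eq_prod])]
    rfl
  have hconst : ∫ _ in R, C = (b - a) * (d - c) * C := by
    rw [setIntegral_const, hvol, smul_eq_mul]
  rw [hiter, ← hconst, ← integral_sub hint (integrableOn_const hfin.ne), ← hvol]
  exact norm_setIntegral_le_of_norm_le_const (f := fun p => Function.uncurry F p - C) hfin
    fun p hp => hδ p.1 (Ioc_subset_Icc_self hp.1) p.2 (Ioc_subset_Icc_self hp.2)

lemma abs_cellAvg_sub_le {n : ℕ} {W : ℝ → ℝ → ℝ} {K : NNReal}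
    (hW : LipschitzOnWith K (Function.uncurry W) (Icc 0 1 ×ˢ Icc 0 1)) (i j : Fin n) {y : ℝ}
    (hy : y ∈ cell n j) : |cellAvg W n i j - W ((i.val : ℝ) / n) y| ≤ K / n := by
  have hn : (0 : ℝ) < n := by exact_mod_cast i.pos
  have hnear : ∀ x ∈ cell n i, ∀ y' ∈ cell n j, |W x y' - W ((i.val : ℝ) / n) y| ≤ K / n := by
    intro x hx y' hy'
    have h := hW.dist_le_mul (x, y')
      ⟨cell_subset_unitInterval i hx, cell_subset_unitInterval j hy'⟩
      (_, y) ⟨cell_subset_unitInterval i (left_mem_cell i), cell_subset_unitInterval j hy⟩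
    rw [Prod.dist_eq, Real.dist_eq, Real.dist_eq] at h
    calc |W x y' - W ((i.val : ℝ) / n) y| ≤ K * max |x - (i.val : ℝ) / n| |y' - y| := h
      _ ≤ K * (1 / n) := by
        gcongr
        exact max_le (abs_sub_le_of_mem_cell hx (left_mem_cell i)) (abs_sub_le_of_mem_cell hy' hy)
      _ = K / n := mul_one_div _ _
  have h := abs_integral_integral_sub_const_le (cell_left_le_right i) (cell_left_le_right j)
    (hW.continuousOn.mono (prod_mono (cell_subset_unitInterval i) (cell_subset_unitInterval j)))
    hnear
  have harea : (((i.val : ℝ) + 1) / n - (i.val : ℝ) / n)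
      * (((j.val : ℝ) + 1) / n - (j.val : ℝ) / n) = 1 / (n : ℝ) ^ 2 := by
    field_simp; ring
  rw [harea] at h
  have hrepr : cellAvg W n i j - W ((i.val : ℝ) / n) y
      = (n : ℝ) ^ 2 * ((∫ x in ((i.val : ℝ) / n)..(((i.val : ℝ) + 1) / n),
          ∫ y in ((j.val : ℝ) / n)..(((j.val : ℝ) + 1) / n), W x y)
          - 1 / (n : ℝ) ^ 2 * W ((i.val : ℝ) / n) y) := by
    rw [cellAvg]; field_simp
  calc |cellAvg W n i j - W ((i.val : ℝ) / n) y|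
      ≤ (n : ℝ) ^ 2 * (K / n * (1 / (n : ℝ) ^ 2)) := by
        rw [hrepr, abs_mul, abs_of_pos (by positivity)]
        gcongr
    _ = K / n := by field_simp

section Coupling

variable {n : ℕ} {W : ℝ → ℝ → ℝ} {D φ : ℝ → ℝ} {KW LD : NNReal} {u : Fin n → ℝ} {e ε₁ : ℝ}

lemma abs_cellAvg_mul_sub_mul_le
    (hW : LipschitzOnWith KW (Function.uncurry W) (Icc 0 1 ×ˢ Icc 0 1))
    (hW1 : ∀ x ∈ Icc (0 : ℝ) 1, ∀ y ∈ Icc (0 : ℝ) 1, |W x y| ≤ 1)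
    (hD : LipschitzWith LD D) (hD1 : ∀ v, |D v| ≤ 1)
    (hu : ∀ j, |u j - φ ((j.val : ℝ) / n)| ≤ e)
    (hφ : ∀ j, ∀ y ∈ cell n j, |φ ((j.val : ℝ) / n) - φ y| ≤ ε₁) (i j : Fin n) {y : ℝ}
    (hy : y ∈ cell n j) :
    |cellAvg W n i j * D (u j - u i) - W ((i.val : ℝ) / n) y * D (φ y - φ ((i.val : ℝ) / n))|
      ≤ KW / n + LD * (2 * e + ε₁) := by
  set a := (i.val : ℝ) / n
  have hWa : |W a y| ≤ 1 :=
    hW1 a (cell_subset_unitInterval i (left_mem_cell i)) y (cell_subset_unitInterval j hy)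
  have hdiff : |(u j - u i) - (φ y - φ a)| ≤ 2 * e + ε₁ := by
    have := abs_sub_le_iff.1 (hu i)
    have := abs_sub_le_iff.1 (hu j)
    have := abs_sub_le_iff.1 (hφ j y hy)
    rw [abs_sub_le_iff]
    constructor <;> linarith
  have hDdiff : |D (u j - u i) - D (φ y - φ a)| ≤ LD * (2 * e + ε₁) := by
    have := hD.dist_le_mul (u j - u i) (φ y - φ a)
    rw [Real.dist_eq, Real.dist_eq] at this
    exact this.trans (by gcongr)
  calc |cellAvg W n i j * D (u j - u i) - W a y * D (φ y - φ a)|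
      = |(cellAvg W n i j - W a y) * D (u j - u i)
          + W a y * (D (u j - u i) - D (φ y - φ a))| := by
        congr 1; ring
    _ ≤ |cellAvg W n i j - W a y| * |D (u j - u i)|
          + |W a y| * |D (u j - u i) - D (φ y - φ a)| := by
        rw [← abs_mul, ← abs_mul]
        exact abs_add_le _ _
    _ ≤ KW / n * 1 + 1 * (LD * (2 * e + ε₁)) := by
        gcongr
        · exact abs_cellAvg_sub_le hW i j hy
        · exact hD1 _
    _ = KW / n + LD * (2 * e + ε₁) := by ring

lemma abs_sum_cellAvg_sub_integral_le
    (hW : LipschitzOnWith KW (Function.uncurry W) (Icc 0 1 ×ˢ Icc 0 1))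
    (hW1 : ∀ x ∈ Icc (0 : ℝ) 1, ∀ y ∈ Icc (0 : ℝ) 1, |W x y| ≤ 1)
    (hD : LipschitzWith LD D) (hD1 : ∀ v, |D v| ≤ 1) (hφc : ContinuousOn φ (Icc 0 1))
    (hu : ∀ j, |u j - φ ((j.val : ℝ) / n)| ≤ e)
    (hφ : ∀ j, ∀ y ∈ cell n j, |φ ((j.val : ℝ) / n) - φ y| ≤ ε₁) (i : Fin n) :
    |(n : ℝ)⁻¹ * ∑ j, cellAvg W n i j * D (u j - u i)
        - ∫ y in (0 : ℝ)..1, W ((i.val : ℝ) / n) y * D (φ y - φ ((i.val : ℝ) / n))|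
      ≤ KW / n + LD * (2 * e + ε₁) := by
  set a := (i.val : ℝ) / n
  set g := fun y => W a y * D (φ y - φ a)
  have hn : (0 : ℝ) < n := by exact_mod_cast i.pos
  have hg : ContinuousOn g (Icc 0 1) := by
    have hWa : ContinuousOn (W a) (Icc 0 1) :=
      hW.continuousOn.comp (continuous_const.prodMk continuous_id).continuousOn
        fun y hy => ⟨cell_subset_unitInterval i (left_mem_cell i), hy⟩
    exact hWa.mul (hD.continuous.comp_continuousOn (hφc.sub continuousOn_const))
  have hcell : ∀ j : Fin n, (n : ℝ)⁻¹ * (cellAvg W n i j * D (u j - u i))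
      - ∫ y in ((j.val : ℝ) / n)..(((j.val : ℝ) + 1) / n), g y
      = ∫ y in ((j.val : ℝ) / n)..(((j.val : ℝ) + 1) / n),
          (cellAvg W n i j * D (u j - u i) - g y) := by
    intro j
    rw [intervalIntegral.integral_sub intervalIntegrable_const, intervalIntegral.integral_const,
      smul_eq_mul]
    · congr 1; field_simp; ring
    · refine (hg.mono ?_).intervalIntegrable
      rw [uIcc_of_le (cell_left_le_right j)]
      exact cell_subset_unitInterval j
  have hterm : ∀ j : Fin n, |∫ y in ((j.val : ℝ) / n)..(((j.val : ℝ) + 1) / n),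
      (cellAvg W n i j * D (u j - u i) - g y)| ≤ (KW / n + LD * (2 * e + ε₁)) * (1 / n) := by
    intro j
    have h := intervalIntegral.norm_integral_le_of_norm_le_const
      (f := fun y => cellAvg W n i j * D (u j - u i) - g y) fun y hy =>
        abs_cellAvg_mul_sub_mul_le hW hW1 hD hD1 hu hφ i j
          (uIoc_subset_uIcc.trans (uIcc_of_le (cell_left_le_right j)).subset hy)
    have hlen : |((j.val : ℝ) + 1) / n - (j.val : ℝ) / n| = 1 / n := by
      rw [abs_of_nonneg (by linarith [cell_left_le_right j])]
      ring
    rwa [hlen] at h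
  rw [integral_unitInterval_eq_sum_cells i.pos (hg.intervalIntegrable_of_Icc zero_le_one),
    Finset.mul_sum, ← Finset.sum_sub_distrib]
  simp_rw [hcell]
  calc _ ≤ ∑ _j : Fin n, (KW / n + LD * (2 * e + ε₁)) * (1 / n) :=
        (Finset.abs_sum_le_sum_abs _ _).trans (Finset.sum_le_sum fun j _ => hterm j)
    _ = KW / n + LD * (2 * e + ε₁) := by
        rw [Finset.sum_const, Finset.card_univ, Fintype.card_fin, nsmul_eq_mul]
        field_simp

end Coupling

noncomputable def adsField (g D : ℝ → ℝ) (W : ℝ → ℝ → ℝ) (n : ℕ) (v : Fin n → ℝ) (i : Fin n) :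
    ℝ :=
  g (v i) + (n : ℝ)⁻¹ * ∑ j, cellAvg W n i j * D (v j - v i)

noncomputable def cdsField (g D : ℝ → ℝ) (W : ℝ → ℝ → ℝ) (φ : ℝ → ℝ) (x : ℝ) : ℝ :=
  g (φ x) + ∫ y in (0 : ℝ)..1, W x y * D (φ y - φ x)

lemma norm_adsField_sub_cdsField_le {n : ℕ} {g D φ : ℝ → ℝ} {W : ℝ → ℝ → ℝ} {Lg KW LD : NNReal}
    {ε₁ : ℝ} (hg : LipschitzWith Lg g)
    (hW : LipschitzOnWith KW (Function.uncurry W) (Icc 0 1 ×ˢ Icc 0 1))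
    (hW1 : ∀ x ∈ Icc (0 : ℝ) 1, ∀ y ∈ Icc (0 : ℝ) 1, |W x y| ≤ 1)
    (hD : LipschitzWith LD D) (hD1 : ∀ v, |D v| ≤ 1) (hφc : ContinuousOn φ (Icc 0 1))
    (hε₁ : 0 ≤ ε₁) (hφ : ∀ j, ∀ y ∈ cell n j, |φ ((j.val : ℝ) / n) - φ y| ≤ ε₁)
    (v : Fin n → ℝ) :
    ‖fun i => adsField g D W n v i - cdsField g D W φ ((i.val : ℝ) / n)‖
      ≤ (Lg + 2 * LD) * ‖fun i => v i - φ ((i.val : ℝ) / n)‖ + (KW / n + LD * ε₁) := by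
  set e := ‖fun i => v i - φ ((i.val : ℝ) / n)‖
  have hu : ∀ j : Fin n, |v j - φ ((j.val : ℝ) / n)| ≤ e :=
    fun j => norm_le_pi_norm (fun i => v i - φ ((i.val : ℝ) / n)) j
  refine (pi_norm_le_iff_of_nonneg (by positivity)).2 fun i => ?_
  have hlip : |g (v i) - g (φ ((i.val : ℝ) / n))| ≤ Lg * e := by
    have := hg.dist_le_mul (v i) (φ ((i.val : ℝ) / n))
    rw [Real.dist_eq, Real.dist_eq] at this
    exact this.trans (by gcongr; exact hu i)
  have hcoupling := abs_sum_cellAvg_sub_integral_le hW hW1 hD hD1 hφc hu hφ i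
  rw [Real.norm_eq_abs, adsField, cdsField, add_sub_add_comm]
  linarith [abs_add_le (g (v i) - g (φ ((i.val : ℝ) / n)))
    ((n : ℝ)⁻¹ * ∑ j, cellAvg W n i j * D (v j - v i)
      - ∫ y in (0 : ℝ)..1, W ((i.val : ℝ) / n) y * D (φ y - φ ((i.val : ℝ) / n)))]

lemma exists_pos_gronwallBound_lt (K T : ℝ) {ε : ℝ} (hε : 0 < ε) :
    ∃ ρ > 0, gronwallBound 0 K ρ T < ε := by
  have h : Tendsto (fun ρ => gronwallBound 0 K ρ T) (nhdsWithin 0 (Ioi 0)) (nhds 0) := by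
    simpa only [gronwallBound_ε0_δ0] using
      ((gronwallBound_continuous_ε 0 K T).tendsto 0).mono_left nhdsWithin_le_nhds
  exact ((h.eventually (gt_mem_nhds hε)).and self_mem_nhdsWithin).exists.imp
    fun ρ hρ => ⟨hρ.2, hρ.1⟩

lemma norm_sub_sample_le_gronwallBound {n : ℕ} {f : ℝ → ℝ → ℝ} {D : ℝ → ℝ} {W : ℝ → ℝ → ℝ}
    {Lf KW LD : NNReal} (hf : ∀ t, LipschitzWith Lf fun u => f u t)
    (hW : LipschitzOnWith KW (Function.uncurry W) (Icc 0 1 ×ˢ Icc 0 1))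
    (hW1 : ∀ x ∈ Icc (0 : ℝ) 1, ∀ y ∈ Icc (0 : ℝ) 1, |W x y| ≤ 1)
    (hD : LipschitzWith LD D) (hD1 : ∀ v, |D v| ≤ 1) {θ : ℝ → ℝ → ℝ}
    (hθcont : ContinuousOn (fun p : ℝ × ℝ => θ p.1 p.2) (Ici 0 ×ˢ Icc 0 1))
    (hθode : ∀ t ∈ Ici (0 : ℝ), ∀ x ∈ Icc (0 : ℝ) 1,
      HasDerivWithinAt (fun s => θ s x) (cdsField (f · t) D W (θ t) x) (Ici 0) t)
    {v : ℝ → Fin n → ℝ} (hv0 : ∀ i, v 0 i = θ 0 ((i.val : ℝ) / n))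
    (hvode : ∀ i, ∀ t ∈ Ici (0 : ℝ),
      HasDerivWithinAt (fun s => v s i) (adsField (f · t) D W n (v t) i) (Ici 0) t)
    {T ε₁ ρ : ℝ} (hT : 0 ≤ T) (hε₁ : 0 ≤ ε₁)
    (hθcell : ∀ t ∈ Icc 0 T, ∀ j, ∀ y ∈ cell n j, |θ t ((j.val : ℝ) / n) - θ t y| ≤ ε₁)
    (hρ : KW / n + LD * ε₁ ≤ ρ) :
    ‖fun i => v T i - θ T ((i.val : ℝ) / n)‖ ≤ gronwallBound 0 (Lf + 2 * LD) ρ T := by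
  have hsample : ∀ i : Fin n, ContinuousOn (fun s => θ s ((i.val : ℝ) / n)) (Ici 0) :=
    fun i => hθcont.comp (continuous_id.prodMk continuous_const).continuousOn
      fun s hs => ⟨hs, cell_subset_unitInterval i (left_mem_cell i)⟩
  have hslice : ∀ t ≥ 0, ContinuousOn (θ t) (Icc 0 1) :=
    fun t ht => hθcont.comp (continuous_const.prodMk continuous_id).continuousOn
      fun x hx => ⟨ht, hx⟩
  have h := norm_le_gronwallBound_of_norm_deriv_right_le (a := 0) (b := T) (δ := 0)
    (K := Lf + 2 * LD) (ε := ρ) (f := fun t i => v t i - θ t ((i.val : ℝ) / n))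
    (f' := fun t i =>
      adsField (f · t) D W n (v t) i - cdsField (f · t) D W (θ t) ((i.val : ℝ) / n))
    ?cont ?deriv ?init ?bound T ⟨hT, le_rfl⟩
  · simpa using h
  case cont =>
    refine continuousOn_pi.2 fun i => ContinuousOn.sub (fun t ht => ?_) ?_
    · exact ((hvode i t ht.1).continuousWithinAt).mono Icc_subset_Ici_self
    · exact (hsample i).mono Icc_subset_Ici_self
  case deriv =>
    refine fun t ht => hasDerivWithinAt_pi.2 fun i => ?_
    exact ((hvode i t ht.1).sub
      (hθode t ht.1 _ (cell_subset_unitInterval i (left_mem_cell i)))).mono (Ici_subset_Ici.2 ht.1)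
  case init =>
    simp only [hv0, sub_self]
    exact norm_zero.le
  case bound =>
    intro t ht
    refine (norm_adsField_sub_cdsField_le (hf t) hW hW1 hD hD1 (hslice t ht.1) hε₁
      (hθcell t (Ico_subset_Icc_self ht)) (v t)).trans ?_
    gcongr

lemma eventually_abs_sub_lt_of_mem_cell {θ : ℝ → ℝ → ℝ} {T ε : ℝ}
    (hθ : ContinuousOn (fun p : ℝ × ℝ => θ p.1 p.2) (Icc 0 T ×ˢ Icc 0 1)) (hε : 0 < ε) :
    ∀ᶠ n : ℕ in atTop, ∀ t ∈ Icc 0 T, ∀ j : Fin n, ∀ y ∈ cell n j,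
      |θ t ((j.val : ℝ) / n) - θ t y| < ε := by
  obtain ⟨δ, hδ, hθδ⟩ := Metric.uniformContinuousOn_iff.1
    ((isCompact_Icc.prod isCompact_Icc).uniformContinuousOn_of_continuous hθ) ε hε
  filter_upwards [tendsto_one_div_atTop_nhds_zero_nat.eventually (gt_mem_nhds hδ)]
    with n hn t ht j y hy
  refine hθδ (t, _) ⟨ht, cell_subset_unitInterval j (left_mem_cell j)⟩ (t, y)
    ⟨ht, cell_subset_unitInterval j hy⟩ ?_
  rw [Prod.dist_eq, dist_self, Real.dist_eq, max_eq_right (abs_nonneg _)]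
  exact (abs_sub_le_of_mem_cell (left_mem_cell j) hy).trans_lt hn

theorem statement6_general (Lf LD : NNReal) (f : ℝ → ℝ → ℝ) (D : ℝ → ℝ) (W : ℝ → ℝ → ℝ)
    (η : ℝ → ℝ)
    (hf_lip : ∀ t, LipschitzWith Lf fun u => f u t)
    (hD_lip : LipschitzWith LD D)
    (hD_bdd : ∀ u, |D u| ≤ 1)
    (hW_C1 : ContDiffOn ℝ 1 (Function.uncurry W) (Icc 0 1 ×ˢ Icc 0 1))
    (hW_mem : ∀ x ∈ Icc (0:ℝ) 1, ∀ y ∈ Icc (0:ℝ) 1, W x y ∈ Icc (0:ℝ) 1)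
    -- `θ` is the solution of the continuum dynamical system (CDS):
    (θ : ℝ → ℝ → ℝ)
    (hθ0 : ∀ x ∈ Icc (0:ℝ) 1, θ 0 x = η x)
    (hθcont : ContinuousOn (fun p : ℝ × ℝ => θ p.1 p.2) (Ici 0 ×ˢ Icc 0 1))
    (hθode : ∀ t ∈ Ici (0:ℝ), ∀ x ∈ Icc (0:ℝ) 1,
      HasDerivWithinAt (fun s => θ s x)
        (f (θ t x) t + ∫ y in (0:ℝ)..1, W x y * D (θ t y - θ t x)) (Ici 0) t)
    -- the solution of the averaged dynamical system (ADS):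
    (Θbar : (n : ℕ) → ℝ → Fin n → ℝ)
    (hΘbar0 : ∀ n (i : Fin n), Θbar n 0 i = η ((i.val : ℝ) / n))
    (hΘbarode : ∀ n, 0 < n → ∀ i : Fin n, ∀ t ∈ Ici (0:ℝ),
      HasDerivWithinAt (fun s => Θbar n s i)
        (f (Θbar n t i) t +
          (n : ℝ)⁻¹ * ∑ j, cellAvg W n i j * D (Θbar n t j - Θbar n t i))
        (Ici 0) t)
    (ε T : ℝ) (hε : 0 < ε) (hT : 0 < T) :
    ∃ N : ℕ, ∀ n > N, ∀ x ∈ Ico (0:ℝ) 1,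
      |interp n (Θbar n T) x - θ T x| < ε := by
  obtain ⟨KW, hKW⟩ := hW_C1.exists_lipschitzOnWith one_ne_zero
    ((convex_Icc 0 1).prod (convex_Icc 0 1)) (isCompact_Icc.prod isCompact_Icc)
  have hW1 : ∀ x ∈ Icc (0 : ℝ) 1, ∀ y ∈ Icc (0 : ℝ) 1, |W x y| ≤ 1 := fun x hx y hy =>
    abs_le.2 ⟨by linarith [(hW_mem x hx y hy).1], (hW_mem x hx y hy).2⟩
  obtain ⟨ρ, hρ, hgron⟩ := exists_pos_gronwallBound_lt (Lf + 2 * LD) T (half_pos hε)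
  set ε₁ := min (ρ / (2 * (LD + 1))) (ε / 2)
  have hε₁ : 0 < ε₁ := lt_min (by positivity) (half_pos hε)
  have hLDε₁ : LD * ε₁ ≤ ρ / 2 :=
    calc LD * ε₁ ≤ (LD + 1) * (ρ / (2 * (LD + 1))) := by
          gcongr
          · linarith
          · exact min_le_left _ _
      _ = ρ / 2 := by field_simp
  obtain ⟨N, hN⟩ := eventually_atTop.1 <|
    (eventually_abs_sub_lt_of_mem_cell (hθcont.mono (prod_mono Icc_subset_Ici_self subset_rfl))
      hε₁).and <|
      (tendsto_const_div_atTop_nhds_zero_nat (KW : ℝ)).eventually (gt_mem_nhds (half_pos hρ))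
  refine ⟨N, fun n hn x hx => ?_⟩
  obtain ⟨hcell, hKWn⟩ := hN n hn.le
  have hn0 : 0 < n := (Nat.zero_le N).trans_lt hn
  have hsampled := norm_sub_sample_le_gronwallBound hf_lip hKW hW1 hD_lip hD_bdd hθcont hθode
    (fun i => (hΘbar0 n i).trans (hθ0 _ (cell_subset_unitInterval i (left_mem_cell i))).symm)
    (hΘbarode n hn0) hT.le hε₁.le (fun t ht j y hy => (hcell t ht j y hy).le)
    (by linarith : KW / n + LD * ε₁ ≤ ρ)
  obtain ⟨i, hi⟩ := exists_mem_Ico_cell hn0 hx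
  rw [interp_eq_of_mem_Ico _ hi]
  calc |Θbar n T i - θ T x|
      ≤ |Θbar n T i - θ T ((i.val : ℝ) / n)| + |θ T ((i.val : ℝ) / n) - θ T x| :=
        abs_sub_le _ _ _
    _ < ε / 2 + ε / 2 := by
        refine add_lt_add_of_le_of_lt ?_ ?_
        · exact (norm_le_pi_norm (fun i => Θbar n T i - θ T ((i.val : ℝ) / n)) i).trans
            (hsampled.trans hgron.le)
        · exact (hcell T ⟨hT.le, le_rfl⟩ i x ⟨hi.1, hi.2.le⟩).trans_le (min_le_right _ _)
    _ = ε := add_halves ε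

/-- Averaged-versus-continuum convergence: for any `ε, T > 0`, for all large `n` the
piecewise constant interpolant of the solution of the averaged dynamical system is
uniformly `ε`-close at time `T` to the solution of the continuum dynamical system. -/
theorem statement6 (Lf LD : NNReal) (f : ℝ → ℝ → ℝ) (D : ℝ → ℝ) (W : ℝ → ℝ → ℝ)
    (η : ℝ → ℝ)
    (hf_lip : ∀ t, LipschitzWith Lf fun u => f u t)
    (hf_per : ∀ u t, f (u + 2 * Real.pi) t = f u t)
    (hf_cont : ∀ u, Continuous fun t => f u t)
    (hD_lip : LipschitzWith LD D)
    (hD_per : ∀ u, D (u + 2 * Real.pi) = D u)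
    (hD_bdd : ∀ u, |D u| ≤ 1)
    (hW_C1 : ContDiffOn ℝ 1 (Function.uncurry W) (Icc 0 1 ×ˢ Icc 0 1))
    (hW_mem : ∀ x ∈ Icc (0:ℝ) 1, ∀ y ∈ Icc (0:ℝ) 1, W x y ∈ Icc (0:ℝ) 1)
    (hW_sym : ∀ x ∈ Icc (0:ℝ) 1, ∀ y ∈ Icc (0:ℝ) 1, W x y = W y x)
    (hη : ContDiffOn ℝ 1 η (Icc 0 1))
    -- `θ` is the solution of the continuum dynamical system (CDS):
    (θ : ℝ → ℝ → ℝ)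
    (hθ0 : ∀ x ∈ Icc (0:ℝ) 1, θ 0 x = η x)
    (hθcont : ContinuousOn (fun p : ℝ × ℝ => θ p.1 p.2) (Ici 0 ×ˢ Icc 0 1))
    (hθode : ∀ t ∈ Ici (0:ℝ), ∀ x ∈ Icc (0:ℝ) 1,
      HasDerivWithinAt (fun s => θ s x)
        (f (θ t x) t + ∫ y in (0:ℝ)..1, W x y * D (θ t y - θ t x)) (Ici 0) t)
    -- the solution of the averaged dynamical system (ADS):
    (Θbar : (n : ℕ) → ℝ → Fin n → ℝ)
    (hΘbar0 : ∀ n (i : Fin n), Θbar n 0 i = η ((i.val : ℝ) / n))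
    (hΘbarode : ∀ n, 0 < n → ∀ i : Fin n, ∀ t ∈ Ici (0:ℝ),
      HasDerivWithinAt (fun s => Θbar n s i)
        (f (Θbar n t i) t +
          (n : ℝ)⁻¹ * ∑ j, cellAvg W n i j * D (Θbar n t j - Θbar n t i))
        (Ici 0) t)
    (ε T : ℝ) (hε : 0 < ε) (hT : 0 < T) :
    ∃ N : ℕ, ∀ n > N, ∀ x ∈ Ico (0:ℝ) 1,
      |interp n (Θbar n T) x - θ T x| < ε :=
  statement6_general Lf LD f D W η hf_lip hD_lip hD_bdd hW_C1 hW_mem θ hθ0 hθcont hθode Θbar hΘbar0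
    hΘbarode ε T hε hT
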